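/- arXiv:1503.06447 — 2 statements merged into one kernel-verified Lean document; each statement's English description precedes it below -/
import Mathlib

section
/- Let n, r, k be positive integers with 2r ≤ n and r < min(k, n−k). Then the real matrix E_r with rows and columns indexed by the r-element subsets I, J of [n], defined by E_r(I,J) = 2^{−C(2r,2)} · C(n−2r+|I∩J|, |I∩J|) · C(k, 2r−|I∩J|)/C(2r, 2r−|I∩J|), is positive definite. -/
/-!
With `W` the inclusion matrix of `r`-sets versus `k`-sets of `[n]`, the entry `(W Wᵀ)(I, J)`
counts the `k`-sets containing `I ∪ J`, a number depending only on `|I ∩ J|`; two applications of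
`C(a, b) C(b, c) = C(a, c) C(a - c, b - c)` show that `E_r` is a positive multiple of `W Wᵀ`.
So it suffices that `W` has full row rank (Gottlieb–Kantor), and for `r ≤ k ≤ n - r` we write
down a right inverse of `W` by inclusion–exclusion.
-/

open Finset

/-- The matrix `E_r`, indexed by the `r`-element subsets of `[n]`:
`E_r(I,J) = 2^{−C(2r,2)} · C(n−2r+|I∩J|, |I∩J|) · C(k, 2r−|I∩J|)/C(2r, 2r−|I∩J|)`. -/
noncomputable def EmatR (n r k : ℕ) :
    Matrix {I : Finset (Fin n) // I.card = r} {I : Finset (Fin n) // I.card = r} ℝ :=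
  fun I J =>
    ((2 : ℝ) ^ (Nat.choose (2 * r) 2))⁻¹
      * (Nat.choose (n - 2 * r + (I.1 ∩ J.1).card) (I.1 ∩ J.1).card : ℝ)
      * (Nat.choose k (2 * r - (I.1 ∩ J.1).card) : ℝ)
      / (Nat.choose (2 * r) (2 * r - (I.1 ∩ J.1).card) : ℝ)

open Matrix

namespace Finset

variable {α : Type*}

theorem sum_subtype_card_eq_sum_powersetCard [Fintype α] {M : Type*} [AddCommMonoid M]
    (k : ℕ) (f : Finset α → M) :
    ∑ S : {S : Finset α // #S = k}, f S = ∑ S ∈ powersetCard k univ, f S :=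
  (sum_subtype _ (fun _ => mem_powersetCard_univ) f).symm

variable [DecidableEq α]

theorem sum_powerset_filter_disjoint_neg_one_pow {R : Type*} [Ring R] (A B : Finset α) :
    ∑ F ∈ A.powerset with Disjoint B F, (-1 : R) ^ #F = if A ⊆ B then 1 else 0 := by
  have hfilter : {F ∈ A.powerset | Disjoint B F} = (A \ B).powerset := by
    ext F
    simp [subset_sdiff, disjoint_comm]
  have hsum := congrArg (Int.cast : ℤ → R) (sum_powerset_neg_one_pow_card (x := A \ B))
  push_cast at hsum
  simp only [hfilter, hsum, sdiff_eq_empty_iff_subset]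

variable [Fintype α]

theorem card_filter_superset_mul_choose (A : Finset α) (k : ℕ) :
    #{S ∈ powersetCard k (univ : Finset α) | A ⊆ S} * (Fintype.card α).choose #A
      = (Fintype.card α).choose k * k.choose #A := by
  by_cases hAk : #A ≤ k
  · rw [card_filter_powersetCard_subset A univ k (subset_univ A) hAk, card_univ, mul_comm,
      Nat.choose_mul hAk]
  · have hempty : {S ∈ powersetCard k (univ : Finset α) | A ⊆ S} = ∅ :=
      filter_false_of_mem fun S hS hAS =>
        hAk ((card_le_card hAS).trans (mem_powersetCard_univ.mp hS).le)
    rw [hempty, Nat.choose_eq_zero_of_lt (not_le.mp hAk)]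
    simp

theorem card_filter_superset_disjoint {I F : Finset α} {k : ℕ} (hIk : #I ≤ k) :
    #{S ∈ powersetCard k (univ : Finset α) | I ⊆ S ∧ Disjoint S F}
      = if Disjoint I F then (Fintype.card α - #F - #I).choose (k - #I) else 0 := by
  split_ifs with hIF
  · have hfilter : {S ∈ powersetCard k (univ : Finset α) | I ⊆ S ∧ Disjoint S F}
        = {S ∈ powersetCard k Fᶜ | I ⊆ S} := by
      ext S
      simp only [mem_filter, mem_powersetCard, subset_univ, true_and,
        subset_compl_iff_disjoint_right]
      tauto
    rw [hfilter, card_filter_powersetCard_subset I Fᶜ k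
      (subset_compl_iff_disjoint_right.mpr hIF) hIk, card_compl]
  · exact card_eq_zero.mpr (filter_false_of_mem fun S _ h => hIF (h.2.mono_left h.1))

end Finset

theorem Matrix.vecMul_injective_of_mul_eq_one {m n R : Type*} [Fintype m] [Fintype n]
    [DecidableEq m] [Semiring R] {A : Matrix m n R} {B : Matrix n m R} (h : A * B = 1) :
    Function.Injective A.vecMul := fun x y hxy => by
  simpa [vecMul_vecMul, h] using congrArg (· ᵥ* B) hxy

section InclusionMatrix

variable (R α : Type*) [Fintype α] [DecidableEq α] (r k : ℕ)

def inclusionMatrix [Zero R] [One R] :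
    Matrix {I : Finset α // #I = r} {S : Finset α // #S = k} R :=
  of fun I S => if I.1 ⊆ S.1 then 1 else 0

/-- `W` sends the column `S ↦ [S ∩ F = ∅]` to `C(|α| - |F| - r, k - r) • (I ↦ [I ∩ F = ∅])`,
and `∑_{F ⊆ I₀} (-1)^|F| [I ∩ F = ∅] = [I₀ ⊆ I] = [I = I₀]`. -/
def inclusionMatrixRightInverse [DivisionRing R] :
    Matrix {S : Finset α // #S = k} {I : Finset α // #I = r} R :=
  of fun S I => ∑ F ∈ I.1.powerset with Disjoint S.1 F,
    (-1) ^ #F / ((Fintype.card α - #F - r).choose (k - r) : R)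

variable {R α r k}

theorem inclusionMatrix_mul_transpose_apply [Semiring R] (I J : {I : Finset α // #I = r}) :
    (inclusionMatrix R α r k * (inclusionMatrix R α r k)ᵀ) I J
      = #{S ∈ powersetCard k univ | I.1 ∪ J.1 ⊆ S} := by
  simp only [mul_apply, transpose_apply, inclusionMatrix, of_apply, mul_ite, mul_one, mul_zero,
    ← ite_and, union_subset_iff]
  rw [sum_subtype_card_eq_sum_powersetCard k (fun S => if J.1 ⊆ S ∧ I.1 ⊆ S then (1 : R) else 0),
    sum_boole]
  simp only [and_comm]

theorem inclusionMatrix_mul_rightInverse [Field R] [CharZero R] (hrk : r ≤ k)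
    (hrkα : r + k ≤ Fintype.card α) :
    inclusionMatrix R α r k * inclusionMatrixRightInverse R α r k = 1 := by
  ext I I₀
  have hcount (F : Finset α) :
      ∑ S : {S : Finset α // #S = k}, (if I.1 ⊆ S.1 ∧ Disjoint S.1 F then (1 : R) else 0)
        = if Disjoint I.1 F then ((Fintype.card α - #F - r).choose (k - r) : R) else 0 := by
    rw [sum_subtype_card_eq_sum_powersetCard k
        (fun S => if I.1 ⊆ S ∧ Disjoint S F then (1 : R) else 0),
      sum_boole, card_filter_superset_disjoint (I.2.symm ▸ hrk), I.2]
    split_ifs <;> simp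
  calc (inclusionMatrix R α r k * inclusionMatrixRightInverse R α r k) I I₀
      = ∑ F ∈ I₀.1.powerset, (-1) ^ #F / ((Fintype.card α - #F - r).choose (k - r) : R)
          * ∑ S : {S : Finset α // #S = k}, (if I.1 ⊆ S.1 ∧ Disjoint S.1 F then 1 else 0) := by
        simp only [mul_apply, inclusionMatrix, inclusionMatrixRightInverse, of_apply, sum_filter,
          mul_sum]
        rw [sum_comm]
        refine sum_congr rfl fun F _ => sum_congr rfl fun S _ => ?_
        by_cases hIS : I.1 ⊆ S.1 <;> by_cases hSF : Disjoint S.1 F <;> simp [hIS, hSF]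
    _ = ∑ F ∈ I₀.1.powerset with Disjoint I.1 F, (-1 : R) ^ #F := by
        rw [sum_filter]
        refine sum_congr rfl fun F hF => ?_
        have hF : #F ≤ r := I₀.2 ▸ card_le_card (mem_powerset.mp hF)
        rw [hcount, mul_ite, mul_zero, div_mul_cancel₀]
        exact_mod_cast (Nat.choose_pos (by omega)).ne'
    _ = (1 : Matrix _ _ R) I I₀ := by
        rw [sum_powerset_filter_disjoint_neg_one_pow, one_apply]
        congr 1
        exact propext ⟨fun h => (Subtype.ext (eq_of_subset_of_card_le h (by rw [I.2, I₀.2]))).symm,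
          fun h => h ▸ subset_refl _⟩

theorem inclusionMatrix_vecMul_injective [Field R] [CharZero R] (hrk : r ≤ k)
    (hrkα : r + k ≤ Fintype.card α) :
    Function.Injective (inclusionMatrix R α r k).vecMul :=
  vecMul_injective_of_mul_eq_one (inclusionMatrix_mul_rightInverse hrk hrkα)

theorem posDef_inclusionMatrix_mul_transpose (hrk : r ≤ k) (hrkα : r + k ≤ Fintype.card α) :
    (inclusionMatrix ℝ α r k * (inclusionMatrix ℝ α r k)ᵀ).PosDef := by
  rw [← conjTranspose_eq_transpose_of_trivial]
  exact .mul_conjTranspose_self _ (inclusionMatrix_vecMul_injective hrk hrkα)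

end InclusionMatrix

theorem EmatR_eq_smul_inclusionMatrix_mul_transpose {n r k : ℕ} (hrn : 2 * r ≤ n) (hkn : k ≤ n) :
    EmatR n r k = (((2 : ℝ) ^ (2 * r).choose 2)⁻¹ * n.choose (2 * r) / n.choose k) •
      (inclusionMatrix ℝ (Fin n) r k * (inclusionMatrix ℝ (Fin n) r k)ᵀ) := by
  ext I J
  rw [Matrix.smul_apply, inclusionMatrix_mul_transpose_apply, EmatR, smul_eq_mul]
  have hut : #(I.1 ∪ J.1) + #(I.1 ∩ J.1) = 2 * r := by
    rw [card_union_add_card_inter, I.2, J.2, two_mul]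
  have hcount := card_filter_superset_mul_choose (I.1 ∪ J.1) k
  rw [Fintype.card_fin] at hcount
  generalize #{S ∈ powersetCard k univ | I.1 ∪ J.1 ⊆ S} = N at *
  generalize #(I.1 ∪ J.1) = u at *
  generalize #(I.1 ∩ J.1) = t at *
  have hchoose := Nat.choose_mul (n := n) (k := 2 * r) (s := u) (by omega)
  rw [show n - 2 * r + t = n - u by omega, show 2 * r - t = u by omega]
  rw [show 2 * r - u = t by omega] at hchoose
  have hk : (n.choose k : ℝ) ≠ 0 := by exact_mod_cast (Nat.choose_pos hkn).ne'
  have hu : ((2 * r).choose u : ℝ) ≠ 0 := by exact_mod_cast (Nat.choose_pos (by omega)).ne'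
  have hnu : (n.choose u : ℝ) ≠ 0 := by exact_mod_cast (Nat.choose_pos (by omega)).ne'
  have hcountℝ : (_ : ℝ) = _ := congrArg (Nat.cast (R := ℝ)) hcount
  have hchooseℝ : (_ : ℝ) = _ := congrArg (Nat.cast (R := ℝ)) hchoose
  push_cast at hcountℝ hchooseℝ
  field_simp
  apply mul_right_cancel₀ hnu
  linear_combination -(k.choose u * n.choose k : ℝ) * hchooseℝ
    - ((2 * r).choose u * n.choose (2 * r) : ℝ) * hcountℝ

theorem EmatR_posDef_general (n r k : ℕ) (hrk : r < k) (hrnk : r < n - k) :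
    (EmatR n r k).PosDef := by
  have hkn : k ≤ n := by omega
  have hrn : 2 * r ≤ n := by omega
  have hrkn : r + k ≤ Fintype.card (Fin n) := by rw [Fintype.card_fin]; omega
  rw [EmatR_eq_smul_inclusionMatrix_mul_transpose hrn hkn]
  refine (posDef_inclusionMatrix_mul_transpose hrk.le hrkn).smul ?_
  have h2r := Nat.choose_pos hrn
  have hk := Nat.choose_pos hkn
  positivity

/-- For positive integers `n, r, k` with `2r ≤ n` and
`r < min(k, n−k)`, the matrix `E_r` is positive definite. -/
theorem EmatR_posDef (n r k : ℕ) (hn : 1 ≤ n) (hr : 1 ≤ r) (hk : 1 ≤ k)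
    (hrn : 2 * r ≤ n) (hrk : r < k) (hrnk : r < n - k) :
    (EmatR n r k).PosDef :=
  EmatR_posDef_general n r k hrk hrnk
end

section
/- Let r ≥ 1 be an integer, set d = 2r, and let I ⊆ [n] with |I| ≤ d. For every ε ∈ (0,1), if n ≥ 4d²·2^{2d}·(3 − ln ε)², then for G ← G(n,1/2), conditioned on the event that I is a clique of G, the probability that |deg_G(I) − 2^{C(|I|,2) − C(d,2)}·C(n−|I|, d−|I|)| > 8·(3 − ln ε)·n^{d−|I|−1/2} is less than ε. -/
open Finset

/-- `deg_G(I)`: the number of sets `S ⊆ [n]` with `I ⊆ S`, `|S| = 2r`, and `S` a clique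
of `G`. -/
noncomputable def degG {n : ℕ} (G : SimpleGraph (Fin n)) (r : ℕ) (I : Finset (Fin n)) : ℕ :=
  Nat.card {S : Finset (Fin n) // I ⊆ S ∧ S.card = 2 * r ∧ G.IsClique (S : Set (Fin n))}

/-!
Conditioned on `I` being a clique, `G` is a uniformly random assignment of bits to the potential
edges not inside `I`. Give each such edge to an endpoint outside `I`. Changing the bits of the
edges of one vertex `v` changes `deg_G(I)` by at most the number `C(n-|I|-1, d-|I|-1)` of
candidate sets containing `I ∪ {v}`, and the mean of `deg_G(I)` is exactly
`2^{C(|I|,2) - C(d,2)} C(n-|I|, d-|I|)`. McDiarmid's bounded-differences inequality, with the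
elementary estimate `exp x ≤ x + exp x²` in place of Hoeffding's lemma, bounds the tail by
`2 exp (-t² / (4 n^{2(d-|I|)-1}))`, which is `2 exp (-16 (3 - ln ε)²) < ε` at the given `t`.
When `|I| = d`, `deg_G(I) = 1` is deterministic.
-/

open Real
open scoped BigOperators

theorem Real.exp_le_add_exp_sq (x : ℝ) : exp x ≤ x + exp (x ^ 2) := by
  have hsq := add_one_le_exp (x ^ 2)
  rcases le_or_gt |x| 1 with hx | hx
  · linarith [(abs_le.1 (abs_exp_sub_one_sub_id_le hx)).2]
  · rcases lt_abs.1 hx with hx | hx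
    · linarith [exp_le_exp.2 (by nlinarith : x ≤ x ^ 2)]
    · nlinarith [exp_le_one_iff.2 (by linarith : x ≤ 0)]

section Expectation

variable {ι : Type*} [Fintype ι] [Nonempty ι]

theorem expect_exp_mul_le_of_expect_eq_zero {Z : ι → ℝ} {c : ℝ} (l : ℝ)
    (hZ : 𝔼 i, Z i = 0) (hc : ∀ i, |Z i| ≤ c) :
    𝔼 i, exp (l * Z i) ≤ exp (l ^ 2 * c ^ 2) := by
  have hpoint : ∀ i, exp (l * Z i) ≤ l * Z i + exp (l ^ 2 * c ^ 2) := fun i => by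
    have hsq : (l * Z i) ^ 2 ≤ l ^ 2 * c ^ 2 := by
      rw [mul_pow]
      exact mul_le_mul_of_nonneg_left (sq_le_sq.2 ((hc i).trans (le_abs_self c))) (sq_nonneg l)
    linarith [exp_le_add_exp_sq (l * Z i), exp_le_exp.2 hsq]
  calc 𝔼 i, exp (l * Z i) ≤ 𝔼 i, (l * Z i + exp (l ^ 2 * c ^ 2)) :=
        expect_le_expect fun i _ => hpoint i
    _ = exp (l ^ 2 * c ^ 2) := by
        rw [expect_add_distrib, ← mul_expect, hZ, expect_const univ_nonempty]; ring

theorem abs_sub_expect_le {F : ι → ℝ} {c : ℝ} (i : ι) (hF : ∀ j, |F i - F j| ≤ c) :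
    |F i - 𝔼 j, F j| ≤ c := by
  rw [← Fintype.expect_const (ι := ι) (F i), ← expect_sub_distrib]
  exact (abs_expect_le _ _).trans (expect_le univ_nonempty fun j _ => hF j)

/-- Hoeffding's lemma, with the constant `c ^ 2` in place of `c ^ 2 / 8`. -/
theorem expect_exp_mul_le_of_abs_sub_le {F : ι → ℝ} {c : ℝ} (l : ℝ)
    (hF : ∀ i j, |F i - F j| ≤ c) :
    𝔼 i, exp (l * F i) ≤ exp (l ^ 2 * c ^ 2) * exp (l * 𝔼 i, F i) := by
  have hcenter : 𝔼 i, (F i - 𝔼 j, F j) = 0 := by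
    rw [expect_sub_distrib, expect_const univ_nonempty, sub_self]
  calc 𝔼 i, exp (l * F i) = (𝔼 i, exp (l * (F i - 𝔼 j, F j))) * exp (l * 𝔼 i, F i) := by
        rw [expect_mul]
        exact expect_congr rfl fun i _ => by rw [← exp_add]; ring_nf
    _ ≤ exp (l ^ 2 * c ^ 2) * exp (l * 𝔼 i, F i) :=
        mul_le_mul_of_nonneg_right
          (expect_exp_mul_le_of_expect_eq_zero l hcenter fun i => abs_sub_expect_le i (hF i))
          (exp_pos _).le

end Expectation

section BoundedDifferences

variable {E B α : Type*} [Fintype E] [DecidableEq E] [DecidableEq B] [Fintype α] [Nonempty α]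

def resampleBlock (block : E → B) (b : B) (x z : E → α) : E → α :=
  fun e => if block e = b then z e else x e

/-- `(x, z) ↦ (resampleBlock x z, resampleBlock z x)` is an involution of the product. -/
theorem expect_expect_resampleBlock (block : E → B) (b : B) (F : (E → α) → ℝ) :
    𝔼 x, 𝔼 z, F (resampleBlock block b x z) = 𝔼 x, F x := by
  let σ : Equiv.Perm ((E → α) × (E → α)) :=
    Function.Involutive.toPerm
      (fun p => (resampleBlock block b p.1 p.2, resampleBlock block b p.2 p.1)) fun p => by
        ext e <;> by_cases h : block e = b <;> simp [resampleBlock, h]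
  calc 𝔼 x, 𝔼 z, F (resampleBlock block b x z) = 𝔼 p : (E → α) × (E → α), F (σ p).1 := by
        rw [← expect_product' univ univ fun x z => F (resampleBlock block b x z), univ_product_univ]
        rfl
    _ = 𝔼 p : (E → α) × (E → α), F p.1 :=
        Fintype.expect_equiv σ (fun p => F (σ p).1) (fun p => F p.1) fun _ => rfl
    _ = 𝔼 x, F x := by
        rw [← univ_product_univ, expect_product' univ univ fun x _ => F x]
        simp only [Fintype.expect_const]

variable (block : E → B) (c : B → ℝ)

/-- McDiarmid's bounded-differences inequality for the moment generating function, by induction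
on the set of blocks that `f` depends on: averaging `f` over the last block `b` costs the factor
`exp (l ^ 2 * c b ^ 2)` by Hoeffding's lemma. -/
theorem expect_exp_mul_le_of_boundedDifferences (l : ℝ) (s : Finset B) {f : (E → α) → ℝ}
    (hf : ∀ b x y, (∀ e, block e ≠ b → x e = y e) → |f x - f y| ≤ c b)
    (hs : ∀ x y, (∀ e, block e ∈ s → x e = y e) → f x = f y) (h0 : 𝔼 x, f x = 0) :
    𝔼 x, exp (l * f x) ≤ exp (l ^ 2 * ∑ b ∈ s, c b ^ 2) := by
  induction s using Finset.induction_on generalizing f with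
  | empty =>
    have hf0 : ∀ x, f x = 0 := fun x => by
      rw [← h0, ← Fintype.expect_const (ι := E → α) (f x)]
      exact expect_congr rfl fun y _ => hs x y (by simp)
    simp [hf0]
  | insert b s hb ih =>
    set g : (E → α) → ℝ := fun x => 𝔼 z, f (resampleBlock block b x z)
    have hg : ∀ b' x y, (∀ e, block e ≠ b' → x e = y e) → |g x - g y| ≤ c b' := by
      intro b' x y hxy
      rw [← expect_sub_distrib]
      refine (abs_expect_le _ _).trans (expect_le univ_nonempty fun z _ => hf b' _ _ fun e he => ?_)
      by_cases h : block e = b <;> simp [resampleBlock, h, hxy e he]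
    have hgs : ∀ x y, (∀ e, block e ∈ s → x e = y e) → g x = g y := by
      refine fun x y hxy => expect_congr rfl fun z _ => hs _ _ fun e he => ?_
      by_cases h : block e = b
      · simp [resampleBlock, h]
      · simp [resampleBlock, h, hxy e ((mem_insert.1 he).resolve_left h)]
    have hg0 : 𝔼 x, g x = 0 := (expect_expect_resampleBlock block b f).trans h0
    calc 𝔼 x, exp (l * f x) = 𝔼 x, 𝔼 z, exp (l * f (resampleBlock block b x z)) :=
          (expect_expect_resampleBlock block b _).symm
      _ ≤ 𝔼 x, exp (l ^ 2 * c b ^ 2) * exp (l * g x) :=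
          expect_le_expect fun x _ => expect_exp_mul_le_of_abs_sub_le l fun z z' =>
            hf b _ _ fun e he => by simp [resampleBlock, he]
      _ = exp (l ^ 2 * c b ^ 2) * 𝔼 x, exp (l * g x) := (mul_expect _ _ _).symm
      _ ≤ exp (l ^ 2 * c b ^ 2) * exp (l ^ 2 * ∑ b ∈ s, c b ^ 2) :=
          mul_le_mul_of_nonneg_left (ih hg hgs hg0) (exp_pos _).le
      _ = exp (l ^ 2 * ∑ b ∈ insert b s, c b ^ 2) := by
          rw [sum_insert hb, ← exp_add]; ring_nf

theorem card_lt_abs_div_card_le_of_boundedDifferences [Fintype B] {f : (E → α) → ℝ}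
    (hf : ∀ b x y, (∀ e, block e ≠ b → x e = y e) → |f x - f y| ≤ c b) (h0 : 𝔼 x, f x = 0)
    {t V : ℝ} (ht : 0 < t) (hV : 0 < V) (hc : ∑ b, c b ^ 2 ≤ V) :
    (#{x | t < |f x|} : ℝ) / Fintype.card (E → α) ≤ 2 * exp (-(t ^ 2 / (4 * V))) := by
  set l := t / (2 * V)
  have hl : 0 < l := by positivity
  have hmgf : ∀ {F : (E → α) → ℝ}, (∀ b x y, (∀ e, block e ≠ b → x e = y e) → |F x - F y| ≤ c b) →
      𝔼 x, F x = 0 → 𝔼 x, exp (l * F x) ≤ exp (l ^ 2 * V) := fun hF hF0 =>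
    (expect_exp_mul_le_of_boundedDifferences block c l univ hF
      (fun x y h => congrArg _ (funext fun e => h e (mem_univ _))) hF0).trans
      (exp_le_exp.2 (mul_le_mul_of_nonneg_left hc (sq_nonneg l)))
  have hmgf_neg := hmgf (F := fun x => -f x) (fun b x y h => by
      rw [neg_sub_neg, abs_sub_comm]; exact hf b x y h) (by rw [expect_neg_distrib, h0, neg_zero])
  have htail : ∀ x, t < |f x| → exp (l * t) ≤ exp (l * f x) + exp (l * -f x) := fun x hx => by
    rcases lt_abs.1 hx with h | h
    · linarith [exp_le_exp.2 (mul_le_mul_of_nonneg_left h.le hl.le), exp_pos (l * -f x)]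
    · linarith [exp_le_exp.2 (mul_le_mul_of_nonneg_left h.le hl.le), exp_pos (l * f x)]
  have hN : (0 : ℝ) < Fintype.card (E → α) := by exact_mod_cast Fintype.card_pos
  have hcount : (#{x | t < |f x|} : ℝ) * exp (l * t)
      ≤ Fintype.card (E → α) * (2 * exp (l ^ 2 * V)) := by
    calc (#{x | t < |f x|} : ℝ) * exp (l * t) = ∑ x with t < |f x|, exp (l * t) := by
          rw [sum_const, nsmul_eq_mul]
      _ ≤ ∑ x with t < |f x|, (exp (l * f x) + exp (l * -f x)) :=
          sum_le_sum fun x hx => htail x (mem_filter.1 hx).2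
      _ ≤ ∑ x, (exp (l * f x) + exp (l * -f x)) :=
          sum_le_sum_of_subset_of_nonneg (filter_subset _ _) fun _ _ _ => by positivity
      _ = Fintype.card (E → α) * (𝔼 x, exp (l * f x) + 𝔼 x, exp (l * -f x)) := by
          rw [← expect_add_distrib, Fintype.card_mul_expect]
      _ ≤ Fintype.card (E → α) * (2 * exp (l ^ 2 * V)) := by
          gcongr; linarith [hmgf hf h0, hmgf_neg]
  have hexp : exp (l ^ 2 * V) / exp (l * t) = exp (-(t ^ 2 / (4 * V))) := by
    rw [← exp_sub]; congr 1; simp only [l]; field_simp; ring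
  calc (#{x | t < |f x|} : ℝ) / Fintype.card (E → α) ≤ 2 * exp (l ^ 2 * V) / exp (l * t) := by
        rw [div_le_div_iff₀ hN (exp_pos _)]; linarith
    _ = 2 * exp (-(t ^ 2 / (4 * V))) := by rw [mul_div_assoc, hexp]

end BoundedDifferences

section CliqueGraphs

variable {n : ℕ} (I : Finset (Fin n))

/-- Each potential edge `{a, b}` not inside `I` is listed once, as the pair `(a, b)` whose first
entry, its owner, is the endpoint outside `I`, or the larger one when both are outside. -/
abbrev IsFreeEdge (a b : Fin n) : Prop := a ∉ I ∧ (b ∈ I ∨ b < a)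

abbrev FreeEdge : Type := {p : Fin n × Fin n // IsFreeEdge I p.1 p.2}

variable {I}

theorem IsFreeEdge.ne {a b : Fin n} (h : IsFreeEdge I a b) : a ≠ b := by
  rintro rfl
  exact h.2.elim h.1 (lt_irrefl a)

theorem IsFreeEdge.not_swap {a b : Fin n} (h : IsFreeEdge I a b) : ¬IsFreeEdge I b a := by
  rintro ⟨hb, ha | ha⟩
  · exact h.1 ha
  · exact h.2.elim hb (lt_asymm ha)

theorem isFreeEdge_or_swap {a b : Fin n} (hab : a ≠ b) (hI : ¬(a ∈ I ∧ b ∈ I)) :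
    IsFreeEdge I a b ∨ IsFreeEdge I b a := by
  by_cases ha : a ∈ I <;> by_cases hb : b ∈ I
  · exact absurd ⟨ha, hb⟩ hI
  · exact .inr ⟨hb, .inl ha⟩
  · exact .inl ⟨ha, .inl hb⟩
  · exact (lt_or_gt_of_ne hab).symm.imp (fun h => ⟨ha, .inr h⟩) fun h => ⟨hb, .inr h⟩

variable (I)

def graphOfBits (x : FreeEdge I → Bool) : SimpleGraph (Fin n) :=
  SimpleGraph.fromRel fun a b => (a ∈ I ∧ b ∈ I) ∨ ∃ h : IsFreeEdge I a b, x ⟨(a, b), h⟩ = true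

variable {I}

theorem graphOfBits_adj_of_isFreeEdge (x : FreeEdge I → Bool) {a b : Fin n}
    (h : IsFreeEdge I a b) : (graphOfBits I x).Adj a b ↔ x ⟨(a, b), h⟩ = true := by
  rw [graphOfBits, SimpleGraph.fromRel_adj]
  refine ⟨?_, fun hx => ⟨h.ne, .inl (.inr ⟨h, hx⟩)⟩⟩
  rintro ⟨-, (⟨ha, -⟩ | ⟨_, hx⟩) | (⟨-, ha⟩ | ⟨h', -⟩)⟩
  · exact absurd ha h.1
  · exact hx
  · exact absurd ha h.1
  · exact absurd h' h.not_swap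

theorem isClique_graphOfBits (x : FreeEdge I → Bool) :
    (graphOfBits I x).IsClique (I : Set (Fin n)) :=
  fun _ ha _ hb hab => (SimpleGraph.fromRel_adj _ _ _).2 ⟨hab, .inl (.inl ⟨ha, hb⟩)⟩

theorem graphOfBits_isClique_iff (x : FreeEdge I → Bool) (S : Finset (Fin n)) :
    (graphOfBits I x).IsClique (S : Set (Fin n)) ↔
      ∀ e : FreeEdge I, e.1.1 ∈ S → e.1.2 ∈ S → x e = true := by
  refine ⟨fun hS e h1 h2 => (graphOfBits_adj_of_isFreeEdge x e.2).1 (hS h1 h2 e.2.ne), ?_⟩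
  intro hx a ha b hb hab
  by_cases hI : a ∈ I ∧ b ∈ I
  · exact isClique_graphOfBits x hI.1 hI.2 hab
  rcases isFreeEdge_or_swap hab hI with h | h
  · exact (graphOfBits_adj_of_isFreeEdge x h).2 (hx ⟨_, h⟩ ha hb)
  · exact ((graphOfBits_adj_of_isFreeEdge x h).2 (hx ⟨_, h⟩ hb ha)).symm

theorem graphOfBits_adj_congr {x y : FreeEdge I → Bool} {v : Fin n}
    (hxy : ∀ e : FreeEdge I, e.1.1 ≠ v → x e = y e) {a b : Fin n} (ha : a ≠ v) (hb : b ≠ v) :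
    (graphOfBits I x).Adj a b ↔ (graphOfBits I y).Adj a b := by
  have hab : ∀ {u w : Fin n}, u ≠ v → ((∃ h : IsFreeEdge I u w, x ⟨(u, w), h⟩ = true) ↔
      ∃ h : IsFreeEdge I u w, y ⟨(u, w), h⟩ = true) := fun hu =>
    exists_congr fun h => by rw [hxy ⟨_, h⟩ hu]
  simp only [graphOfBits, SimpleGraph.fromRel_adj, hab ha, hab hb]

open Classical in
theorem graphOfBits_decide_adj {G : SimpleGraph (Fin n)} (hG : G.IsClique (I : Set (Fin n))) :
    graphOfBits I (fun e => decide (G.Adj e.1.1 e.1.2)) = G := by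
  ext a b
  refine ⟨fun h => ?_, fun h => ?_⟩
  · rw [graphOfBits, SimpleGraph.fromRel_adj] at h
    obtain ⟨hab, (⟨ha, hb⟩ | ⟨_, h⟩) | (⟨hb, ha⟩ | ⟨_, h⟩)⟩ := h
    · exact hG ha hb hab
    · exact of_decide_eq_true h
    · exact hG ha hb hab
    · exact (of_decide_eq_true h).symm
  · by_cases hI : a ∈ I ∧ b ∈ I
    · exact isClique_graphOfBits _ hI.1 hI.2 h.ne
    rcases isFreeEdge_or_swap h.ne hI with h' | h'
    · exact (graphOfBits_adj_of_isFreeEdge _ h').2 (decide_eq_true h)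
    · exact ((graphOfBits_adj_of_isFreeEdge _ h').2 (decide_eq_true h.symm)).symm

theorem graphOfBits_injective : Function.Injective (graphOfBits I) := by
  intro x y hxy
  funext ⟨⟨a, b⟩, h⟩
  have := graphOfBits_adj_of_isFreeEdge x h
  rw [hxy, graphOfBits_adj_of_isFreeEdge y h] at this
  exact Bool.eq_iff_iff.2 this.symm

variable (I)

open Classical in
noncomputable def graphOfBitsEquiv :
    (FreeEdge I → Bool) ≃ {G : SimpleGraph (Fin n) // G.IsClique (I : Set (Fin n))} :=
  Equiv.ofBijective (fun x => ⟨graphOfBits I x, isClique_graphOfBits x⟩)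
    ⟨fun _ _ h => graphOfBits_injective (congrArg Subtype.val h),
      fun ⟨G, hG⟩ => ⟨fun e => decide (G.Adj e.1.1 e.1.2), Subtype.ext (graphOfBits_decide_adj hG)⟩⟩

end CliqueGraphs

section Degrees

variable {n : ℕ}

open Classical in
theorem degG_eq_sum (G : SimpleGraph (Fin n)) (r : ℕ) (I : Finset (Fin n)) :
    (degG G r I : ℝ) = ∑ S ∈ univ.powersetCard (2 * r) with I ⊆ S,
      if G.IsClique (S : Set (Fin n)) then 1 else 0 := by
  rw [sum_boole, filter_filter, degG, Nat.card_eq_fintype_card, Fintype.card_subtype]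
  congr 2
  ext S
  simp only [mem_filter, mem_univ, mem_powersetCard, subset_univ, true_and]
  tauto

open Classical in
theorem abs_degG_sub_degG_le {G H : SimpleGraph (Fin n)} (r : ℕ) (I : Finset (Fin n)) (v : Fin n)
    (hGH : ∀ a b, a ≠ v → b ≠ v → (G.Adj a b ↔ H.Adj a b)) :
    |(degG G r I : ℝ) - degG H r I| ≤ #{S ∈ univ.powersetCard (2 * r) | insert v I ⊆ S} := by
  have hclique : ∀ S : Finset (Fin n), v ∉ S →
      (G.IsClique (S : Set (Fin n)) ↔ H.IsClique (S : Set (Fin n))) := fun S hv => by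
    simp only [SimpleGraph.IsClique, Set.Pairwise]
    refine forall₂_congr fun a ha => forall₂_congr fun b hb => imp_congr_right fun _ =>
      hGH a b (ne_of_mem_of_not_mem ha hv) (ne_of_mem_of_not_mem hb hv)
  rw [degG_eq_sum, degG_eq_sum, ← sum_sub_distrib]
  refine (abs_sum_le_sum_abs _ _).trans ?_
  calc _ ≤ ∑ S ∈ univ.powersetCard (2 * r) with I ⊆ S, if v ∈ S then (1 : ℝ) else 0 := by
        refine sum_le_sum fun S _ => ?_
        by_cases hv : v ∈ S
        · simp only [hv, if_true]
          split_ifs <;> norm_num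
        · simp [hv, hclique S hv]
    _ = #{S ∈ univ.powersetCard (2 * r) | insert v I ⊆ S} := by
        rw [sum_boole, filter_filter]
        simp only [insert_subset_iff, and_comm]

theorem abs_degG_graphOfBits_sub_le {I : Finset (Fin n)} {r : ℕ} (hIr : #I < 2 * r) {v : Fin n}
    (hv : v ∉ I) {x y : FreeEdge I → Bool} (hxy : ∀ e : FreeEdge I, e.1.1 ≠ v → x e = y e) :
    |(degG (graphOfBits I x) r I : ℝ) - degG (graphOfBits I y) r I|
      ≤ (n - #I - 1).choose (2 * r - #I - 1) := by
  refine (abs_degG_sub_degG_le r I v fun a b ha hb =>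
    graphOfBits_adj_congr hxy ha hb).trans_eq ?_
  rw [card_filter_powersetCard_subset _ _ _ (subset_univ _)
      (by rw [card_insert_of_notMem hv]; omega), card_univ, Fintype.card_fin, card_insert_of_notMem hv, Nat.sub_sub, Nat.sub_sub]

theorem card_filter_forall_eq_true_mul_two_pow {E : Type*} [Fintype E] [DecidableEq E]
    (s : Finset E) : #{x : E → Bool | ∀ e ∈ s, x e = true} * 2 ^ #s = 2 ^ Fintype.card E := by
  have : ({x : E → Bool | ∀ e ∈ s, x e = true} : Finset _) =
      Fintype.piFinset fun e => if e ∈ s then {true} else univ := by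
    ext x
    simp only [mem_filter, mem_univ, true_and, Fintype.mem_piFinset]
    refine forall_congr' fun e => ?_
    split_ifs with h <;> simp [h]
  simp only [this, Fintype.card_piFinset, apply_ite card, card_singleton, card_univ,
    Fintype.card_bool, prod_ite, prod_const_one, one_mul, prod_const]
  rw [← pow_add, filter_not, filter_mem_eq_inter, univ_inter, card_sdiff_of_subset (subset_univ s),
    card_univ, Nat.sub_add_cancel (card_le_univ s)]

theorem card_freeEdge_subset {I S : Finset (Fin n)} (hIS : I ⊆ S) :
    #{e : FreeEdge I | e.1.1 ∈ S ∧ e.1.2 ∈ S} = (#S).choose 2 - (#I).choose 2 := by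
  rw [← card_powersetCard, ← card_powersetCard, ← card_sdiff_of_subset (powersetCard_mono hIS)]
  refine card_bij (fun e _ => {e.1.1, e.1.2}) ?_ ?_ ?_
  · rintro ⟨⟨a, b⟩, h⟩ he
    obtain ⟨ha, hb⟩ := (mem_filter.1 he).2
    simp only [mem_sdiff, mem_powersetCard, insert_subset_iff, singleton_subset_iff]
    exact ⟨⟨⟨ha, hb⟩, card_pair h.ne⟩, fun h' => h.1 h'.1.1⟩
  · rintro ⟨⟨a, b⟩, h⟩ _ ⟨⟨a', b'⟩, h'⟩ _ heq
    have := congrArg (fun T : Finset (Fin n) => (T : Set (Fin n))) heq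
    simp only [coe_pair, Set.pair_eq_pair_iff] at this
    rcases this with ⟨rfl, rfl⟩ | ⟨rfl, rfl⟩
    · rfl
    · exact absurd h' h.not_swap
  · intro T hT
    simp only [mem_sdiff, mem_powersetCard] at hT
    obtain ⟨⟨hTS, hT2⟩, hTI⟩ := hT
    obtain ⟨a, b, hab, rfl⟩ := card_eq_two.1 hT2
    simp only [insert_subset_iff, singleton_subset_iff] at hTS hTI
    rcases isFreeEdge_or_swap hab fun h => hTI ⟨⟨h.1, h.2⟩, card_pair hab⟩ with h | h
    · exact ⟨⟨(a, b), h⟩, mem_filter.2 ⟨mem_univ _, hTS⟩, rfl⟩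
    · exact ⟨⟨(b, a), h⟩, mem_filter.2 ⟨mem_univ _, hTS.symm⟩, pair_comm _ _⟩

open Classical in
theorem expect_isClique_graphOfBits {I S : Finset (Fin n)} (hIS : I ⊆ S) :
    𝔼 x, (if (graphOfBits I x).IsClique (S : Set (Fin n)) then (1 : ℝ) else 0)
      = ((2 : ℝ) ^ ((#S).choose 2 - (#I).choose 2))⁻¹ := by
  have hcount := card_filter_forall_eq_true_mul_two_pow {e : FreeEdge I | e.1.1 ∈ S ∧ e.1.2 ∈ S}
  rw [card_freeEdge_subset hIS] at hcount
  have hfilter : univ.filter (fun x => (graphOfBits I x).IsClique (S : Set (Fin n)))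
      = univ.filter fun x : FreeEdge I → Bool =>
          ∀ e ∈ ({e : FreeEdge I | e.1.1 ∈ S ∧ e.1.2 ∈ S} : Finset _), x e = true :=
    filter_congr fun x _ => by simp [graphOfBits_isClique_iff]
  rw [Fintype.expect_eq_sum_div_card, sum_boole, hfilter, Fintype.card_fun, Fintype.card_bool,
    div_eq_iff (by positivity), ← hcount]
  push_cast
  field_simp

noncomputable def expectedDegG (r : ℕ) (I : Finset (Fin n)) : ℝ :=
  2 ^ (((#I).choose 2 : ℤ) - ((2 * r).choose 2 : ℤ)) * ((n - #I).choose (2 * r - #I) : ℝ)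

theorem expect_degG_graphOfBits {I : Finset (Fin n)} {r : ℕ} (hI : #I ≤ 2 * r) :
    𝔼 x, (degG (graphOfBits I x) r I : ℝ) = expectedDegG r I := by
  classical
  have hS : ∀ S ∈ ({S ∈ univ.powersetCard (2 * r) | I ⊆ S} : Finset _),
      𝔼 x, (if (graphOfBits I x).IsClique (S : Set (Fin n)) then (1 : ℝ) else 0)
        = ((2 : ℝ) ^ ((2 * r).choose 2 - (#I).choose 2))⁻¹ := fun S hS => by
    rw [mem_filter, mem_powersetCard] at hS
    rw [expect_isClique_graphOfBits hS.2, hS.1.2]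
  simp_rw [degG_eq_sum]
  rw [expect_sum_comm, sum_congr rfl hS, sum_const,
    card_filter_powersetCard_subset _ _ _ (subset_univ _) hI, card_univ, Fintype.card_fin,
    nsmul_eq_mul, expectedDegG, zpow_sub₀ two_ne_zero, zpow_natCast, zpow_natCast,
    pow_sub₀ _ two_ne_zero (Nat.choose_le_choose 2 hI)]
  field_simp

end Degrees

section Concentration

variable {n : ℕ}

theorem degG_eq_one_of_card_eq {G : SimpleGraph (Fin n)} {r : ℕ} {I : Finset (Fin n)}
    (hIr : #I = 2 * r) (hG : G.IsClique (I : Set (Fin n))) : degG G r I = 1 := by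
  rw [degG, Nat.card_eq_one_iff_unique]
  have hI : ∀ S : Finset (Fin n), I ⊆ S ∧ #S = 2 * r ∧ G.IsClique (S : Set (Fin n)) → I = S :=
    fun S hS => eq_of_subset_of_card_le hS.1 (hS.2.1.trans hIr.symm).le
  exact ⟨⟨fun S T => Subtype.ext ((hI S S.2).symm.trans (hI T T.2))⟩, ⟨⟨I, subset_rfl, hIr, hG⟩⟩⟩

open Classical in
theorem card_isClique_and_div_card_isClique (I : Finset (Fin n))
    (P : SimpleGraph (Fin n) → Prop) :
    (Nat.card {G : SimpleGraph (Fin n) // G.IsClique (I : Set (Fin n)) ∧ P G} : ℝ)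
        / Nat.card {G : SimpleGraph (Fin n) // G.IsClique (I : Set (Fin n))}
      = #{x | P (graphOfBits I x)} / Fintype.card (FreeEdge I → Bool) := by
  have hnum : Nat.card {G : SimpleGraph (Fin n) // G.IsClique (I : Set (Fin n)) ∧ P G}
      = Nat.card {x : FreeEdge I → Bool // P (graphOfBits I x)} :=
    Nat.card_congr ((Equiv.subtypeSubtypeEquivSubtypeInter _ P).symm.trans
      ((graphOfBitsEquiv I).subtypeEquiv fun _ => Iff.rfl).symm)
  rw [hnum, Nat.card_congr (graphOfBitsEquiv I).symm, Nat.card_eq_fintype_card,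
    Nat.card_eq_fintype_card, Fintype.card_subtype]

theorem card_mul_choose_sq_le {m k : ℕ} (hm : m ≤ n) : m * (m - 1).choose k ^ 2 ≤ n ^ (2 * k + 1) :=
  calc m * (m - 1).choose k ^ 2 ≤ n * (n ^ k) ^ 2 :=
        Nat.mul_le_mul hm (Nat.pow_le_pow_left ((Nat.choose_le_pow _ _).trans
          (Nat.pow_le_pow_left (by omega) _)) _)
    _ = n ^ (2 * k + 1) := by ring

theorem two_mul_exp_neg_lt {ε : ℝ} (hε0 : 0 < ε) (hε1 : ε < 1) :
    2 * exp (-(16 * (3 - log ε) ^ 2)) < ε := by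
  have hlog := log_neg hε0 hε1
  calc 2 * exp (-(16 * (3 - log ε) ^ 2)) < exp 1 * exp (-(16 * (3 - log ε) ^ 2)) :=
        mul_lt_mul_of_pos_right (by linarith [exp_one_gt_d9]) (exp_pos _)
    _ ≤ exp (log ε) := by rw [← exp_add]; exact exp_le_exp.2 (by nlinarith)
    _ = ε := exp_log hε0

theorem card_lt_abs_degG_sub_div_card_le {I : Finset (Fin n)} {r k : ℕ} (hk : 2 * r = #I + k + 1)
    (hn : 0 < n) {t : ℝ} (ht : 0 < t) :
    (#{x | t < |(degG (graphOfBits I x) r I : ℝ) - expectedDegG r I|} : ℝ)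
        / Fintype.card (FreeEdge I → Bool)
      ≤ 2 * exp (-(t ^ 2 / (4 * n ^ (2 * k + 1)))) := by
  refine card_lt_abs_div_card_le_of_boundedDifferences
    (fun e : FreeEdge I => (⟨e.1.1, e.2.1⟩ : {v // v ∉ I}))
    (fun _ => ((n - #I - 1).choose k : ℝ)) (fun b x y hxy => ?_)
    (by rw [expect_sub_distrib, expect_degG_graphOfBits (by omega), Fintype.expect_const, sub_self])
    ht (by positivity) ?_
  · rw [sub_sub_sub_cancel_right, show k = 2 * r - #I - 1 by omega]
    exact abs_degG_graphOfBits_sub_le (by omega) b.2 fun e he =>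
      hxy e fun h => he (congrArg Subtype.val h)
  · rw [sum_const, card_univ, Fintype.card_subtype_compl, Fintype.card_fin, Fintype.card_coe,
      nsmul_eq_mul]
    exact_mod_cast card_mul_choose_sq_le (Nat.sub_le n #I)

end Concentration

theorem degG_concentration_general (n r : ℕ) (I : Finset (Fin n))
    (hI : I.card ≤ 2 * r) (ε : ℝ) (hε : ε ∈ Set.Ioo (0 : ℝ) 1)
    (hn : 4 * ((2 * r : ℕ) : ℝ) ^ 2 * (2 : ℝ) ^ (2 * (2 * r)) * (3 - Real.log ε) ^ 2
        ≤ (n : ℝ)) :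
    (Nat.card {G : SimpleGraph (Fin n) //
        G.IsClique (I : Set (Fin n)) ∧
        8 * (3 - Real.log ε) * (n : ℝ) ^ (((2 * r : ℕ) : ℝ) - (I.card : ℝ) - 1/2)
          < |(degG G r I : ℝ)
              - (2 : ℝ) ^ ((Nat.choose I.card 2 : ℤ) - (Nat.choose (2 * r) 2 : ℤ))
                * (Nat.choose (n - I.card) (2 * r - I.card) : ℝ)|} : ℝ)
      / (Nat.card {G : SimpleGraph (Fin n) // G.IsClique (I : Set (Fin n))} : ℝ)
      < ε := by
  obtain ⟨hε0, hε1⟩ := hε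
  have hL : 0 < 3 - Real.log ε := by linarith [Real.log_neg hε0 hε1]
  rw [card_isClique_and_div_card_isClique]
  rcases hI.lt_or_eq with hIr | hIr
  · obtain ⟨k, hk⟩ : ∃ k, 2 * r = #I + k + 1 := ⟨2 * r - #I - 1, by omega⟩
    have hn0 : (0 : ℝ) < n := lt_of_lt_of_le (by rw [hk]; positivity) hn
    have hpow : ((n : ℝ) ^ (((2 * r : ℕ) : ℝ) - #I - 1 / 2)) ^ 2 = (n : ℝ) ^ (2 * k + 1) := by
      rw [← rpow_natCast _ 2, ← rpow_mul hn0.le, ← rpow_natCast]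
      push_cast [hk]
      ring_nf
    refine (card_lt_abs_degG_sub_div_card_le hk (by exact_mod_cast hn0) (by positivity)).trans_lt ?_
    rw [mul_pow, hpow, show (8 * (3 - log ε)) ^ 2 * (n : ℝ) ^ (2 * k + 1) / (4 * n ^ (2 * k + 1))
      = 16 * (3 - log ε) ^ 2 by field_simp; ring]
    exact two_mul_exp_neg_lt hε0 hε1
  · rw [filter_false_of_mem fun x _ => ?_, card_empty, Nat.cast_zero, zero_div]
    · exact hε0
    simp only [degG_eq_one_of_card_eq hIr (isClique_graphOfBits x), hIr, Nat.cast_one, sub_self,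
      zpow_zero, tsub_self, Nat.choose_zero_right, mul_one, abs_zero, not_lt]
    positivity

/-- Let `r ≥ 1`, `d = 2r`, and `I ⊆ [n]` with `|I| ≤ d`. For every
`ε ∈ (0,1)`, if `n ≥ 4d²·2^{2d}·(3 − ln ε)²`, then for `G ← G(n,1/2)` (uniform over all
graphs on `[n]`), conditioned on `I` being a clique of `G`, the probability that
`|deg_G(I) − 2^{C(|I|,2) − C(d,2)}·C(n−|I|, d−|I|)| > 8·(3 − ln ε)·n^{d−|I|−1/2}` is
less than `ε`. -/
theorem degG_concentration (n r : ℕ) (hr : 1 ≤ r) (I : Finset (Fin n))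
    (hI : I.card ≤ 2 * r) (ε : ℝ) (hε : ε ∈ Set.Ioo (0 : ℝ) 1)
    (hn : 4 * ((2 * r : ℕ) : ℝ) ^ 2 * (2 : ℝ) ^ (2 * (2 * r)) * (3 - Real.log ε) ^ 2
        ≤ (n : ℝ)) :
    (Nat.card {G : SimpleGraph (Fin n) //
        G.IsClique (I : Set (Fin n)) ∧
        8 * (3 - Real.log ε) * (n : ℝ) ^ (((2 * r : ℕ) : ℝ) - (I.card : ℝ) - 1/2)
          < |(degG G r I : ℝ)
              - (2 : ℝ) ^ ((Nat.choose I.card 2 : ℤ) - (Nat.choose (2 * r) 2 : ℤ))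
                * (Nat.choose (n - I.card) (2 * r - I.card) : ℝ)|} : ℝ)
      / (Nat.card {G : SimpleGraph (Fin n) // G.IsClique (I : Set (Fin n))} : ℝ)
      < ε :=
  degG_concentration_general n r I hI ε hε hn
end
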